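/- arXiv:1408.3706 — 3 statements merged into one kernel-verified Lean document; each statement's English description precedes it below -/
import Mathlib

section
/- Let l be an n-dimensional real Lie algebra with n ≥ 2 and ∇ a torsion-free bilinear product on l whose Weyl projective curvature W vanishes identically. Let s ⊆ l be a Lie subalgebra of dimension m ≥ 2 which is autoparallel, i.e. ∇_X Y ∈ s for all X, Y ∈ s. Then the intrinsic Weyl projective curvature W^s of the restricted product ∇|_s on s (defined using m in place of n and traces over s) also vanishes identically. -/
/-!
Vanishing of `W` says exactly that `R(X,Y)Z = P(Y,Z)X − P(X,Z)Y − (P(X,Y) − P(Y,X))Z`. This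
"projective" shape of the curvature survives restriction to an autoparallel subalgebra `s`, with
`P|_s` in place of `P`. Taking the trace over `s` of a curvature of this shape gives
`Ric^s(X,Y) = m·P(X,Y) − P(Y,X)`, hence `P^s = P|_s` as soon as `m² ≠ 1`, and then `W^s` is the
difference of two equal expressions.
-/

noncomputable section

/-- The curvature `R(X,Y)Z` of a bilinear product `∇` on a Lie algebra. -/
def curv {l : Type*} [LieRing l] [LieAlgebra ℝ l]
    (nab : l →ₗ[ℝ] l →ₗ[ℝ] l) (X Y Z : l) : l :=
  nab X (nab Y Z) - nab Y (nab X Z) - nab ⁅X, Y⁆ Z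

/-- The endomorphism `Z ↦ R(Z,X)Y`. -/
def ricMap {l : Type*} [LieRing l] [LieAlgebra ℝ l]
    (nab : l →ₗ[ℝ] l →ₗ[ℝ] l) (X Y : l) : l →ₗ[ℝ] l :=
  nab.flip (nab X Y) - (nab X) ∘ₗ (nab.flip Y)
    + (nab.flip Y) ∘ₗ (LieAlgebra.ad ℝ l X)

/-- The Ricci tensor `Ric(X,Y) = tr(Z ↦ R(Z,X)Y)`. -/
def ric {l : Type*} [LieRing l] [LieAlgebra ℝ l]
    (nab : l →ₗ[ℝ] l →ₗ[ℝ] l) (X Y : l) : ℝ :=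
  LinearMap.trace ℝ l (ricMap nab X Y)

/-- The tensor `P(X,Y) = (1/(k²−1))·(k·Ric(X,Y) + Ric(Y,X))` with `k = dim l`. -/
def pT {l : Type*} [LieRing l] [LieAlgebra ℝ l]
    (nab : l →ₗ[ℝ] l →ₗ[ℝ] l) (X Y : l) : ℝ :=
  (1 / ((Module.finrank ℝ l : ℝ) ^ 2 - 1))
    * ((Module.finrank ℝ l : ℝ) * ric nab X Y + ric nab Y X)

/-- The Weyl projective curvature
`W(X,Y)Z = R(X,Y)Z + (P(X,Y) − P(Y,X))·Z − P(Y,Z)·X + P(X,Z)·Y`. -/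
def weyl {l : Type*} [LieRing l] [LieAlgebra ℝ l]
    (nab : l →ₗ[ℝ] l →ₗ[ℝ] l) (X Y Z : l) : l :=
  curv nab X Y Z + (pT nab X Y - pT nab Y X) • Z - pT nab Y Z • X + pT nab X Z • Y

open Module

def projCurv {M : Type*} [AddCommGroup M] [Module ℝ M] (p : M →ₗ[ℝ] M →ₗ[ℝ] ℝ) (X Y Z : M) :
    M :=
  p Y Z • X - p X Z • Y - (p X Y - p Y X) • Z

section

variable {L : Type*} [LieRing L] [LieAlgebra ℝ L] (nab : L →ₗ[ℝ] L →ₗ[ℝ] L)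

theorem ricMap_apply (X Y Z : L) : ricMap nab X Y Z = curv nab Z X Y := by
  simp only [ricMap, curv, LinearMap.add_apply, LinearMap.sub_apply, LinearMap.comp_apply,
    LinearMap.flip_apply, LieAlgebra.ad_apply, ← lie_skew X Z, map_neg]
  abel

def ricMapBilin : L →ₗ[ℝ] L →ₗ[ℝ] L →ₗ[ℝ] L :=
  LinearMap.mk₂ ℝ (ricMap nab)
    (fun X X' Y => by
      ext Z; simp only [LinearMap.add_apply, ricMap_apply, curv, map_add, lie_add]; abel)
    (fun c X Y => by ext Z; simp [ricMap_apply, curv, smul_sub])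
    (fun X Y Y' => by
      ext Z; simp only [LinearMap.add_apply, ricMap_apply, curv, map_add]; abel)
    (fun c X Y => by ext Z; simp [ricMap_apply, curv, smul_sub])

def ricForm : L →ₗ[ℝ] L →ₗ[ℝ] ℝ :=
  (ricMapBilin nab).compr₂ (LinearMap.trace ℝ L)

def pForm : L →ₗ[ℝ] L →ₗ[ℝ] ℝ :=
  (1 / ((finrank ℝ L : ℝ) ^ 2 - 1)) • ((finrank ℝ L : ℝ) • ricForm nab + (ricForm nab).flip)

@[simp]
theorem pForm_apply (X Y : L) : pForm nab X Y = pT nab X Y := rfl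

theorem weyl_eq_curv_sub_projCurv (X Y Z : L) :
    weyl nab X Y Z = curv nab X Y Z - projCurv (pForm nab) X Y Z := by
  simp only [weyl, projCurv, pForm_apply]
  module

variable {nab} {p : L →ₗ[ℝ] L →ₗ[ℝ] ℝ}

theorem ric_eq_of_curv_eq_projCurv [FiniteDimensional ℝ L]
    (h : ∀ X Y Z, curv nab X Y Z = projCurv p X Y Z) (X Y : L) :
    ric nab X Y = finrank ℝ L * p X Y - p Y X := by
  have hmap : ricMap nab X Y = p X Y • LinearMap.id - (p.flip Y).smulRight X
      - (p.flip X).smulRight Y + (p X).smulRight Y := by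
    ext Z
    simp only [ricMap_apply, h, projCurv, LinearMap.add_apply, LinearMap.sub_apply,
      LinearMap.smul_apply, LinearMap.id_apply, LinearMap.smulRight_apply, LinearMap.flip_apply]
    module
  rw [ric, hmap]
  simp only [map_add, map_sub, map_smul, LinearMap.trace_id, LinearMap.trace_smulRight,
    LinearMap.flip_apply, smul_eq_mul]
  ring

theorem pT_eq_of_curv_eq_projCurv [FiniteDimensional ℝ L] (hk : finrank ℝ L ≠ 1)
    (h : ∀ X Y Z, curv nab X Y Z = projCurv p X Y Z) (X Y : L) :
    pT nab X Y = p X Y := by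
  have hk' : (finrank ℝ L : ℝ) ^ 2 - 1 ≠ 0 := by
    rw [sub_ne_zero, Ne, pow_eq_one_iff_of_nonneg (Nat.cast_nonneg _) two_ne_zero]
    exact_mod_cast hk
  rw [pT, ric_eq_of_curv_eq_projCurv h, ric_eq_of_curv_eq_projCurv h]
  field_simp
  ring

theorem weyl_eq_zero_of_curv_eq_projCurv [FiniteDimensional ℝ L] (hk : finrank ℝ L ≠ 1)
    (h : ∀ X Y Z, curv nab X Y Z = projCurv p X Y Z) (X Y Z : L) :
    weyl nab X Y Z = 0 := by
  have hp : pForm nab = p := by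
    ext X Y
    rw [pForm_apply, pT_eq_of_curv_eq_projCurv hk h]
  rw [weyl_eq_curv_sub_projCurv, hp, h, sub_self]

theorem coe_curv_of_restrict {s : LieSubalgebra ℝ L} {nabS : s →ₗ[ℝ] s →ₗ[ℝ] s}
    (hnabS : ∀ X Y : s, (nabS X Y : L) = nab X Y) (X Y Z : s) :
    ((curv nabS X Y Z : s) : L) = curv nab X Y Z := by
  simp only [curv, AddSubgroupClass.coe_sub, hnabS, LieSubalgebra.coe_bracket]

theorem curv_restrict_eq_projCurv {s : LieSubalgebra ℝ L} {nabS : s →ₗ[ℝ] s →ₗ[ℝ] s}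
    (hnabS : ∀ X Y : s, (nabS X Y : L) = nab X Y)
    (h : ∀ X Y Z, curv nab X Y Z = projCurv p X Y Z) (X Y Z : s) :
    curv nabS X Y Z = projCurv (p.compl₁₂ (s.incl : s →ₗ[ℝ] L) s.incl) X Y Z := by
  apply Subtype.ext
  rw [coe_curv_of_restrict hnabS, h]
  simp [projCurv]

end

theorem weyl_of_autoparallel_subalgebra_general
    (l : Type*) [LieRing l] [LieAlgebra ℝ l]
    (nab : l →ₗ[ℝ] l →ₗ[ℝ] l)
    (hW : ∀ X Y Z : l, weyl nab X Y Z = 0)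
    (s : LieSubalgebra ℝ l) (hm : 2 ≤ Module.finrank ℝ s)
    (nabS : s →ₗ[ℝ] s →ₗ[ℝ] s)
    (hnabS : ∀ X Y : s, (nabS X Y : l) = nab X Y) :
    ∀ X Y Z : s, weyl nabS X Y Z = 0 := by
  have : FiniteDimensional ℝ s := Module.finite_of_finrank_pos (by omega)
  have hR : ∀ X Y Z : l, curv nab X Y Z = projCurv (pForm nab) X Y Z := fun X Y Z =>
    sub_eq_zero.1 ((weyl_eq_curv_sub_projCurv nab X Y Z).symm.trans (hW X Y Z))
  exact weyl_eq_zero_of_curv_eq_projCurv (by omega) (curv_restrict_eq_projCurv hnabS hR)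

/-- If `∇` is a torsion-free bilinear product on an `n`-dimensional real
Lie algebra `l` (`n ≥ 2`) with vanishing Weyl projective curvature, and `s ⊆ l` is an
autoparallel Lie subalgebra of dimension `m ≥ 2`, then the intrinsic Weyl projective
curvature of the restricted product on `s` also vanishes identically. -/
theorem weyl_of_autoparallel_subalgebra
    (l : Type*) [LieRing l] [LieAlgebra ℝ l]
    [FiniteDimensional ℝ l] (hn : 2 ≤ Module.finrank ℝ l)
    (nab : l →ₗ[ℝ] l →ₗ[ℝ] l)
    (tf : ∀ X Y : l, nab X Y - nab Y X = ⁅X, Y⁆)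
    (hW : ∀ X Y Z : l, weyl nab X Y Z = 0)
    (s : LieSubalgebra ℝ l) (hm : 2 ≤ Module.finrank ℝ s)
    (auto : ∀ X Y : l, X ∈ s → Y ∈ s → nab X Y ∈ s)
    (nabS : s →ₗ[ℝ] s →ₗ[ℝ] s)
    (hnabS : ∀ X Y : s, (nabS X Y : l) = nab X Y) :
    ∀ X Y Z : s, weyl nabS X Y Z = 0 :=
  weyl_of_autoparallel_subalgebra_general l nab hW s hm nabS hnabS

end
end

section
/- Let n ≥ 2 and let Λ' = {i_1 < i_2 < ⋯ < i_m} be a proper subset of {1,…,n−1}, with associated parabolic subalgebra q_{Λ'} ⊆ sl(n,ℝ) and induced product ∇_X Y := XY − (tr(XY)/n)·I_n. Then the following are equivalent: (a) there is no ℝ-linear functional λ : q_{Λ'} → ℝ such that the modified product ∇^λ_X Y := ∇_X Y + λ(X)·Y + λ(Y)·X has identically vanishing curvature on q_{Λ'}; (b) i_1 = 1, i_m = n−1, and i_{r+1} − i_r ≤ 2 for all 1 ≤ r ≤ m−1. -/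
noncomputable section

/-- The block function `b(i) = #{k : 1 ≤ k < i, k ∉ Λ'}` (here `i : Fin n` is the
0-based index corresponding to the 1-based row index `i+1`). -/
def blk (Λ : Finset ℕ) {n : ℕ} (i : Fin n) : ℕ :=
  ((Finset.Icc 1 (i : ℕ)).filter (fun k => k ∉ Λ)).card

/-- Membership in the parabolic subalgebra `q_{Λ'}` of `sl(n,ℝ)`: trace-zero matrices
with `X_{ij} = 0` whenever `b(i) > b(j)`. -/
def inQ (n : ℕ) (Λ : Finset ℕ) (X : Matrix (Fin n) (Fin n) ℝ) : Prop :=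
  Matrix.trace X = 0 ∧ ∀ i j : Fin n, blk Λ j < blk Λ i → X i j = 0

/-- The product `∇_X Y = XY − (tr(XY)/n)·I_n` on `sl(n,ℝ)`. -/
def nabSL (n : ℕ) (X Y : Matrix (Fin n) (Fin n) ℝ) : Matrix (Fin n) (Fin n) ℝ :=
  X * Y - (Matrix.trace (X * Y) / (n : ℝ)) • (1 : Matrix (Fin n) (Fin n) ℝ)

/-- The projectively modified product `∇^λ_X Y = ∇_X Y + λ(X)·Y + λ(Y)·X`. -/
def nabLam (n : ℕ) (lam : Matrix (Fin n) (Fin n) ℝ →ₗ[ℝ] ℝ)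
    (X Y : Matrix (Fin n) (Fin n) ℝ) : Matrix (Fin n) (Fin n) ℝ :=
  nabSL n X Y + lam X • Y + lam Y • X

/-- The condition on `Λ' = {i₁ < i₂ < ⋯ < i_m} ⊆ {1,…,n−1}` that `i₁ = 1`,
`i_m = n−1`, and consecutive elements differ by at most `2`. -/
def denseChain (n : ℕ) (Λ : Finset ℕ) : Prop :=
  1 ∈ Λ ∧ (n - 1) ∈ Λ ∧ ∀ a ∈ Λ, a ≠ n - 1 → ∃ c ∈ Λ, a < c ∧ c ≤ a + 2

/-!
On a singleton block `{i₀}` of `q_{Λ'}` the diagonal entry `X ↦ X_{i₀i₀}` is multiplicative,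
and `λ(X) = -X_{i₀i₀}` makes the connection flat: `λ(I) = -1` kills the trace term of the
curvature and multiplicativity kills the rest. The condition `denseChain` says precisely that
no block is a singleton. Then every `E_{vv}` is paired with some `E_{vw}`, `E_{wv}`, `w ≠ v`,
inside `q_{Λ'}`, and flatness forces `λ(E_{vw}) = 0` and `λ(E_{vv}) = (1 + λ(I))/n`; summing
over `v` gives `λ(I) = 1 + λ(I)`.
-/

open Matrix

section Curvature

variable {n : ℕ} (lam : Matrix (Fin n) (Fin n) ℝ →ₗ[ℝ] ℝ)

def curvLam (X Y Z : Matrix (Fin n) (Fin n) ℝ) : Matrix (Fin n) (Fin n) ℝ :=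
  nabLam n lam X (nabLam n lam Y Z) - nabLam n lam Y (nabLam n lam X Z) - nabLam n lam ⁅X, Y⁆ Z

def projForm (X Z : Matrix (Fin n) (Fin n) ℝ) : ℝ :=
  lam (X * Z) - trace (X * Z) / n * (1 + lam 1) + lam X * lam Z

theorem curvLam_eq {X Y : Matrix (Fin n) (Fin n) ℝ} (Z : Matrix (Fin n) (Fin n) ℝ)
    (hX : trace X = 0) (hY : trace Y = 0) :
    curvLam lam X Y Z = projForm lam Y Z • X - projForm lam X Z • Y - lam ⁅X, Y⁆ • Z := by
  have hYX : trace (Y * X) = trace (X * Y) := trace_mul_comm Y X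
  simp only [curvLam, projForm, nabLam, nabSL, Ring.lie_def, Matrix.mul_add, Matrix.mul_sub,
    Matrix.sub_mul, Matrix.mul_smul, mul_one, trace_add, trace_sub, trace_smul, map_add, map_sub,
    map_smul, smul_eq_mul, Matrix.mul_assoc, hX, hY, hYX, mul_zero, sub_zero]
  match_scalars <;> ring

variable (Λ : Finset ℕ)

def FlatOn : Prop :=
  ∀ X Y Z : Matrix (Fin n) (Fin n) ℝ, inQ n Λ X → inQ n Λ Y → inQ n Λ Z → curvLam lam X Y Z = 0

end Curvature

section Blocks

variable (Λ : Finset ℕ)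

def blockIndex (v : ℕ) : ℕ := ((Finset.Icc 1 v).filter (fun k => k ∉ Λ)).card

theorem blk_eq_blockIndex {n : ℕ} (i : Fin n) : blk Λ i = blockIndex Λ i := rfl

theorem blockIndex_mono : Monotone (blockIndex Λ) := fun _ _ h =>
  Finset.card_le_card (Finset.filter_subset_filter _ (Finset.Icc_subset_Icc_right h))

variable {Λ}

theorem blockIndex_succ_of_mem {v : ℕ} (h : v + 1 ∈ Λ) :
    blockIndex Λ (v + 1) = blockIndex Λ v := by
  rw [blockIndex, ← Finset.insert_Icc_right_eq_Icc_add_one (by omega), Finset.filter_insert,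
    if_neg (not_not.mpr h), blockIndex]

theorem blockIndex_succ_of_notMem {v : ℕ} (h : v + 1 ∉ Λ) :
    blockIndex Λ (v + 1) = blockIndex Λ v + 1 := by
  rw [blockIndex, ← Finset.insert_Icc_right_eq_Icc_add_one (by omega), Finset.filter_insert,
    if_pos h, Finset.card_insert_of_notMem (by simp), blockIndex]

theorem blockIndex_lt_of_notMem {v w : ℕ} (hvw : v < w) (hw : w ∉ Λ) :
    blockIndex Λ v < blockIndex Λ w := by
  obtain ⟨u, rfl⟩ : ∃ u, w = u + 1 := ⟨w - 1, by omega⟩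
  rw [blockIndex_succ_of_notMem hw]
  exact Nat.lt_succ_of_le (blockIndex_mono Λ (by omega))

theorem blk_eq_of_val_eq_succ {n : ℕ} {a b : Fin n} (hab : (b : ℕ) = a + 1) (hb : (b : ℕ) ∈ Λ) :
    blk Λ a = blk Λ b := by
  rw [blk_eq_blockIndex, blk_eq_blockIndex, hab, blockIndex_succ_of_mem (hab ▸ hb)]

/-- Row `i₀` (0-based) is joined to the row above by the root `α_{i₀}` and to the row below by
`α_{i₀+1}`. -/
theorem eq_of_blk_eq_of_isolated {n : ℕ} {i₀ : Fin n} (hA : (i₀ : ℕ) ∉ Λ ∨ (i₀ : ℕ) = 0)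
    (hB : (i₀ : ℕ) + 1 ∉ Λ) {k : Fin n} (hk : blk Λ k = blk Λ i₀) : k = i₀ := by
  rw [blk_eq_blockIndex, blk_eq_blockIndex] at hk
  rcases lt_trichotomy (k : ℕ) i₀ with h | h | h
  · have hi₀ : (i₀ : ℕ) ∉ Λ := hA.resolve_right (by omega)
    exact absurd hk (blockIndex_lt_of_notMem h hi₀).ne
  · exact Fin.ext h
  · have := (blockIndex_lt_of_notMem (Nat.lt_succ_self _) hB).trans_le
      (blockIndex_mono Λ (Nat.succ_le_of_lt h))
    omega

theorem exists_singleton_block_of_not_denseChain {n : ℕ} (hn : 0 < n)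
    (hΛ : Λ ⊆ Finset.Icc 1 (n - 1)) (hnd : ¬ denseChain n Λ) :
    ∃ i₀ : Fin n, ∀ k : Fin n, blk Λ k = blk Λ i₀ → k = i₀ := by
  have hbound : ∀ a ∈ Λ, 1 ≤ a ∧ a ≤ n - 1 := fun a ha => Finset.mem_Icc.mp (hΛ ha)
  by_cases h1 : 1 ∈ Λ
  swap
  · exact ⟨⟨0, hn⟩, fun k => eq_of_blk_eq_of_isolated (Or.inr rfl) h1⟩
  by_cases hlast : n - 1 ∈ Λ
  swap
  · have hn' : n - 1 + 1 ∉ Λ := fun h => by have := hbound _ h; omega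
    exact ⟨⟨n - 1, by omega⟩, fun k => eq_of_blk_eq_of_isolated (Or.inl hlast) hn'⟩
  obtain ⟨a, ha, hane, hgap⟩ : ∃ a ∈ Λ, a ≠ n - 1 ∧ ∀ c ∈ Λ, a < c → a + 2 < c := by
    simpa [denseChain, h1, hlast] using hnd
  have ha1 : a + 1 ∉ Λ := fun h => by have := hgap _ h (by omega); omega
  have ha2 : a + 1 + 1 ∉ Λ := fun h => by have := hgap _ h (by omega); omega
  have := hbound a ha
  exact ⟨⟨a + 1, by omega⟩, fun k => eq_of_blk_eq_of_isolated (Or.inl ha1) ha2⟩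

theorem denseChain.mem_or_succ_mem {n : ℕ} (hd : denseChain n Λ) {v : ℕ} (hv : v ≤ n - 1) :
    v ∈ Λ ∨ v + 1 ∈ Λ := by
  induction v with
  | zero => exact Or.inr hd.1
  | succ v ih =>
    rcases ih (by omega) with h | h
    · obtain ⟨c, hc, hvc, hcv⟩ := hd.2.2 v h (by omega)
      obtain rfl | rfl : c = v + 1 ∨ c = v + 1 + 1 := by omega
      exacts [Or.inl hc, Or.inr hc]
    · exact Or.inl h

theorem denseChain.exists_ne_blk_eq {n : ℕ} (hd : denseChain n Λ)
    (hΛ : Λ ⊆ Finset.Icc 1 (n - 1)) (v : Fin n) : ∃ w : Fin n, w ≠ v ∧ blk Λ w = blk Λ v := by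
  rcases hd.mem_or_succ_mem (Nat.le_sub_one_of_lt v.isLt) with h | h
  · have := Finset.mem_Icc.mp (hΛ h)
    exact ⟨⟨v - 1, by omega⟩, Fin.ne_of_val_ne (by simp; omega),
      blk_eq_of_val_eq_succ (by simp; omega) h⟩
  · have := Finset.mem_Icc.mp (hΛ h)
    exact ⟨⟨v + 1, by omega⟩, Fin.ne_of_val_ne (by simp),
      (blk_eq_of_val_eq_succ rfl h).symm⟩

end Blocks

section Flatness

variable {n : ℕ} {Λ : Finset ℕ}

theorem inQ_mul_apply_of_singleton_block {i₀ : Fin n}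
    (hi₀ : ∀ k : Fin n, blk Λ k = blk Λ i₀ → k = i₀) {X Z : Matrix (Fin n) (Fin n) ℝ}
    (hX : inQ n Λ X) (hZ : inQ n Λ Z) : (X * Z) i₀ i₀ = X i₀ i₀ * Z i₀ i₀ := by
  rw [mul_apply]
  refine Finset.sum_eq_single_of_mem i₀ (Finset.mem_univ _) fun k _ hk => ?_
  rcases lt_or_gt_of_ne fun h => hk (hi₀ k h) with h | h
  · rw [hX.2 i₀ k h, zero_mul]
  · rw [hZ.2 k i₀ h, mul_zero]

theorem flatOn_neg_entryLinearMap {i₀ : Fin n}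
    (hmul : ∀ X Z, inQ n Λ X → inQ n Λ Z → (X * Z) i₀ i₀ = X i₀ i₀ * Z i₀ i₀) :
    FlatOn (-entryLinearMap ℝ ℝ i₀ i₀) Λ := by
  intro X Y Z hX hY hZ
  set lam := -entryLinearMap ℝ ℝ i₀ i₀
  have hform : ∀ {X}, inQ n Λ X → projForm lam X Z = 0 := fun hX => by
    simp [lam, projForm, hmul _ _ hX hZ]
  have hlie : lam ⁅X, Y⁆ = 0 := by
    simp [lam, Ring.lie_def, hmul _ _ hX hY, hmul _ _ hY hX, mul_comm]
  rw [curvLam_eq _ Z hX.1 hY.1, hform hX, hform hY, hlie]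
  simp

theorem inQ_single_of_ne {v w : Fin n} (hvw : v ≠ w) (hb : blk Λ v = blk Λ w) :
    inQ n Λ (single v w 1) :=
  ⟨trace_single_eq_of_ne v w 1 hvw, fun i j hij =>
    single_apply_of_ne v w 1 i j fun ⟨hi, hj⟩ => by subst hi hj; exact hij.ne' hb⟩

theorem inQ_single_sub_single (v w : Fin n) :
    inQ n Λ (single v v 1 - single w w 1) := by
  refine ⟨by simp, fun i j hij => ?_⟩
  have hdiag : ∀ u : Fin n, single u u (1 : ℝ) i j = 0 := fun u =>
    single_apply_of_ne u u 1 i j fun ⟨hi, hj⟩ => by subst hi hj; exact hij.false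
  rw [Matrix.sub_apply, hdiag, hdiag, sub_self]

theorem FlatOn.map_single_of_ne {lam : Matrix (Fin n) (Fin n) ℝ →ₗ[ℝ] ℝ} (hflat : FlatOn lam Λ)
    {v w : Fin n} (hvw : v ≠ w) (hb : blk Λ v = blk Λ w) : lam (single v w 1) = 0 := by
  have h := congrFun₂ (hflat _ _ _ (inQ_single_of_ne hvw hb) (inQ_single_of_ne hvw.symm hb.symm)
    (inQ_single_of_ne hvw hb)) w v
  rw [curvLam_eq _ _ (trace_single_eq_of_ne v w 1 hvw) (trace_single_eq_of_ne w v 1 hvw.symm)] at h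
  simpa [projForm, hvw, hvw.symm] using h

theorem FlatOn.map_single_self {lam : Matrix (Fin n) (Fin n) ℝ →ₗ[ℝ] ℝ} (hflat : FlatOn lam Λ)
    {v w : Fin n} (hvw : v ≠ w) (hb : blk Λ v = blk Λ w) :
    lam (single v v 1) = (1 + lam 1) / n := by
  have h := congrFun₂ (hflat _ _ _ (inQ_single_of_ne hvw hb) (inQ_single_sub_single v w)
    (inQ_single_of_ne hvw.symm hb.symm)) v v
  rw [curvLam_eq _ _ (trace_single_eq_of_ne v w 1 hvw) (by simp)] at h
  have hvv : (n : ℝ)⁻¹ * (1 + lam 1) - lam (single v v 1) = 0 := by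
    simpa [projForm, hvw.symm, hflat.map_single_of_ne hvw hb] using h
  rw [div_eq_inv_mul]
  linarith

theorem not_flatOn_of_forall_exists_ne_blk_eq (hn : n ≠ 0)
    (hpair : ∀ v : Fin n, ∃ w : Fin n, w ≠ v ∧ blk Λ w = blk Λ v)
    (lam : Matrix (Fin n) (Fin n) ℝ →ₗ[ℝ] ℝ) : ¬ FlatOn lam Λ := by
  intro hflat
  have hdiag : ∀ v : Fin n, lam (single v v 1) = (1 + lam 1) / n := fun v => by
    obtain ⟨w, hwv, hb⟩ := hpair v
    exact hflat.map_single_self hwv.symm hb.symm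
  have : lam 1 = 1 + lam 1 := calc
    lam 1 = ∑ v : Fin n, lam (single v v 1) := by rw [← map_sum, sum_single_one]
    _ = n * ((1 + lam 1) / n) := by simp [hdiag]
    _ = 1 + lam 1 := by field_simp
  linarith

end Flatness

theorem parabolic_flat_projective_criterion_general (n : ℕ) (hn : 2 ≤ n)
    (Λ : Finset ℕ) (hΛ : Λ ⊆ Finset.Icc 1 (n - 1)) :
    (¬ ∃ lam : Matrix (Fin n) (Fin n) ℝ →ₗ[ℝ] ℝ,
      ∀ X Y Z : Matrix (Fin n) (Fin n) ℝ, inQ n Λ X → inQ n Λ Y → inQ n Λ Z →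
        nabLam n lam X (nabLam n lam Y Z) - nabLam n lam Y (nabLam n lam X Z)
          - nabLam n lam ⁅X, Y⁆ Z = 0) ↔
    denseChain n Λ := by
  constructor
  · intro hnot
    by_contra hnd
    obtain ⟨i₀, hi₀⟩ := exists_singleton_block_of_not_denseChain (by omega) hΛ hnd
    exact hnot ⟨_, flatOn_neg_entryLinearMap fun _ _ => inQ_mul_apply_of_singleton_block hi₀⟩
  · rintro hd ⟨lam, hflat⟩
    exact not_flatOn_of_forall_exists_ne_blk_eq (by omega) (hd.exists_ne_blk_eq hΛ) lam hflat

/-- For `n ≥ 2` and a proper subset `Λ' = {i₁ < ⋯ < i_m}` of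
`{1,…,n−1}`, the following are equivalent: (a) no linear functional `λ` makes the
modified product `∇^λ_X Y = ∇_X Y + λ(X)·Y + λ(Y)·X` flat on the parabolic
subalgebra `q_{Λ'}` (i.e. the induced connection is not projectively equivalent to
any left-invariant flat affine connection); (b) `i₁ = 1`, `i_m = n−1`, and
`i_{r+1} − i_r ≤ 2` for all consecutive elements. -/
theorem parabolic_flat_projective_criterion (n : ℕ) (hn : 2 ≤ n)
    (Λ : Finset ℕ) (hΛ : Λ ⊆ Finset.Icc 1 (n - 1)) (hΛne : Λ ≠ Finset.Icc 1 (n - 1)) :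
    (¬ ∃ lam : Matrix (Fin n) (Fin n) ℝ →ₗ[ℝ] ℝ,
      ∀ X Y Z : Matrix (Fin n) (Fin n) ℝ, inQ n Λ X → inQ n Λ Y → inQ n Λ Z →
        nabLam n lam X (nabLam n lam Y Z) - nabLam n lam Y (nabLam n lam X Z)
          - nabLam n lam ⁅X, Y⁆ Z = 0) ↔
    denseChain n Λ :=
  parabolic_flat_projective_criterion_general n hn Λ hΛ

end
end

section
/- Let n ≥ 2 and let Λ' be ANY proper subset of {1,…,n−1}, with associated parabolic subalgebra q_{Λ'} ⊆ sl(n,ℍ) (quaternionic block upper triangular matrices with Re tr = 0) and induced product ∇_X Y := XY − (Re(tr(XY))/n)·I_n. Then there is no ℝ-linear functional λ : q_{Λ'} → ℝ such that the modified product ∇^λ_X Y := ∇_X Y + λ(X)·Y + λ(Y)·X has identically vanishing curvature on q_{Λ'}; i.e. the induced affine connection on any parabolic subalgebra of sl(n,ℍ) is not projectively equivalent to any left-invariant flat affine connection. -/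
/-!
Flatness already fails on the diagonal copies `q E_dd` (`q ∈ Im ℍ`), which lie in every parabolic
subalgebra. For `X = j E_dd` and `Y = Z = i E_dd` the curvature of `∇^λ` is a combination of `X`
and `Y` whose `X`-coefficient is `λ(∇_Y Y) + λ(Y)² + 1/n`, so flatness forces `λ(∇_Y Y) < 0`.
But `∇_{i E_dd} (i E_dd) = I/n - E_dd` sums to `0` over `d`, so these negative values of `λ`
add up to `λ 0 = 0`.
-/

noncomputable section

/-- Membership in the parabolic subalgebra `q_{Λ'}` of `sl(n,ℍ)`: quaternionic
matrices with `Re(tr X) = 0` and `X_{ij} = 0` whenever `b(i) > b(j)`. -/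
def inQH (n : ℕ) (Λ : Finset ℕ) (X : Matrix (Fin n) (Fin n) (Quaternion ℝ)) : Prop :=
  (Matrix.trace X).re = 0 ∧ ∀ i j : Fin n, blk Λ j < blk Λ i → X i j = 0

/-- The product `∇_X Y = XY − (Re(tr(XY))/n)·I_n` on `sl(n,ℍ)`. -/
def nabSLH (n : ℕ) (X Y : Matrix (Fin n) (Fin n) (Quaternion ℝ)) :
    Matrix (Fin n) (Fin n) (Quaternion ℝ) :=
  X * Y - ((Matrix.trace (X * Y)).re / (n : ℝ))
    • (1 : Matrix (Fin n) (Fin n) (Quaternion ℝ))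

/-- The projectively modified product `∇^λ_X Y = ∇_X Y + λ(X)·Y + λ(Y)·X`. -/
def nabLamH (n : ℕ) (lam : Matrix (Fin n) (Fin n) (Quaternion ℝ) →ₗ[ℝ] ℝ)
    (X Y : Matrix (Fin n) (Fin n) (Quaternion ℝ)) :
    Matrix (Fin n) (Fin n) (Quaternion ℝ) :=
  nabSLH n X Y + lam X • Y + lam Y • X

open Matrix Quaternion

theorem Quaternion.re_sum {ι : Type*} (s : Finset ι) (f : ι → ℍ[ℝ]) :
    (∑ i ∈ s, f i).re = ∑ i ∈ s, (f i).re :=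
  map_sum (QuaternionAlgebra.reₗ (-1 : ℝ) 0 (-1)) f s

theorem Matrix.re_trace_mul_comm {m : Type*} [Fintype m] (X Y : Matrix m m ℍ[ℝ]) :
    (X * Y).trace.re = (Y * X).trace.re := by
  simp only [trace, diag, mul_apply, re_sum, re_mul]
  rw [Finset.sum_comm]
  congr! 2
  ring

def quatI : ℍ[ℝ] := ⟨0, 1, 0, 0⟩

def quatJ : ℍ[ℝ] := ⟨0, 0, 1, 0⟩

@[simp] theorem re_quatI : quatI.re = 0 := rfl

@[simp] theorem imI_quatI : quatI.imI = 1 := rfl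

@[simp] theorem imJ_quatI : quatI.imJ = 0 := rfl

@[simp] theorem imK_quatI : quatI.imK = 0 := rfl

@[simp] theorem re_quatJ : quatJ.re = 0 := rfl

@[simp] theorem imJ_quatJ : quatJ.imJ = 1 := rfl

@[simp] theorem quatI_mul_self : quatI * quatI = -1 := by
  ext <;> simp [re_mul, imI_mul, imJ_mul, imK_mul]

def nabLamCurvature (n : ℕ) (lam : Matrix (Fin n) (Fin n) ℍ[ℝ] →ₗ[ℝ] ℝ)
    (X Y Z : Matrix (Fin n) (Fin n) ℍ[ℝ]) : Matrix (Fin n) (Fin n) ℍ[ℝ] :=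
  nabLamH n lam X (nabLamH n lam Y Z) - nabLamH n lam Y (nabLamH n lam X Z)
    - nabLamH n lam ⁅X, Y⁆ Z

section
variable {n : ℕ}

theorem nabLamCurvature_eq (lam : Matrix (Fin n) (Fin n) ℍ[ℝ] →ₗ[ℝ] ℝ)
    (X Y Z : Matrix (Fin n) (Fin n) ℍ[ℝ]) (hX : X.trace.re = 0) (hY : Y.trace.re = 0) :
    nabLamCurvature n lam X Y Z
      = (lam (nabSLH n Y Z) + lam Y * lam Z - (Y * Z).trace.re / n) • X
        - (lam (nabSLH n X Z) + lam X * lam Z - (X * Z).trace.re / n) • Y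
        - lam ⁅X, Y⁆ • Z := by
  have hYX := re_trace_mul_comm Y X
  simp only [nabLamCurvature, nabLamH, nabSLH, Ring.lie_def]
  simp only [mul_sub, sub_mul, mul_add, mul_smul_comm, mul_one, trace_sub, trace_add, trace_smul,
    map_sub, map_add, LinearMap.map_smul, Matrix.mul_assoc, smul_sub, smul_add, smul_smul,
    hX, hY, hYX, re_add, re_sub, re_smul, smul_eq_mul, mul_zero, sub_zero]
  match_scalars <;> ring

theorem inQH_single_self (Λ : Finset ℕ) (d : Fin n) {q : ℍ[ℝ]} (hq : q.re = 0) :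
    inQH n Λ (single d d q) := by
  refine ⟨by rwa [trace_single_eq_same], fun i j hij => ?_⟩
  rw [single_apply_of_ne]
  rintro ⟨rfl, rfl⟩
  exact lt_irrefl _ hij

theorem sum_nabSLH_single_self {q : ℍ[ℝ]} (hq : q.re = 0) :
    ∑ d : Fin n, nabSLH n (single d d q) (single d d q) = 0 := by
  rcases Nat.eq_zero_or_pos n with rfl | hn
  · exact Subsingleton.elim _ _
  have hsingle (d : Fin n) : single d d (q * q) = (q * q).re • single d d 1 := by
    rw [smul_single, ← sq, sq_eq_neg_normSq.2 hq]
    congr 1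
    ext <;> simp
  simp only [nabSLH, single_mul_single_same, trace_single_eq_same, Finset.sum_sub_distrib]
  simp only [hsingle, ← Finset.smul_sum, sum_single_one]
  rw [Finset.sum_const, Finset.card_univ, Fintype.card_fin, ← Nat.cast_smul_eq_nsmul ℝ, smul_smul,
    div_mul_cancel₀ _ (by positivity), sub_self]

theorem imJ_nabLamCurvature_single_apply (lam : Matrix (Fin n) (Fin n) ℍ[ℝ] →ₗ[ℝ] ℝ)
    (d : Fin n) :
    (nabLamCurvature n lam (single d d quatJ) (single d d quatI) (single d d quatI) d d).imJ
      = lam (nabSLH n (single d d quatI) (single d d quatI)) + lam (single d d quatI) ^ 2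
        + 1 / n := by
  rw [nabLamCurvature_eq _ _ _ _ (by simp [trace_single_eq_same])
    (by simp [trace_single_eq_same])]
  simp [single_mul_single_same, trace_single_eq_same]
  ring

theorem lam_nabSLH_single_self_neg (lam : Matrix (Fin n) (Fin n) ℍ[ℝ] →ₗ[ℝ] ℝ) (d : Fin n)
    (hflat : nabLamCurvature n lam (single d d quatJ) (single d d quatI) (single d d quatI) = 0) :
    lam (nabSLH n (single d d quatI) (single d d quatI)) < 0 := by
  have hcoeff := imJ_nabLamCurvature_single_apply lam d
  rw [hflat, Matrix.zero_apply, Quaternion.imJ_zero] at hcoeff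
  have hn : 0 < 1 / (n : ℝ) := by
    have := d.pos
    positivity
  nlinarith [sq_nonneg (lam (single d d quatI))]

end

theorem parabolic_quaternion_not_projectively_flat_to_flat_general (n : ℕ) (hn : 2 ≤ n)
    (Λ : Finset ℕ) :
    ¬ ∃ lam : Matrix (Fin n) (Fin n) (Quaternion ℝ) →ₗ[ℝ] ℝ,
      ∀ X Y Z : Matrix (Fin n) (Fin n) (Quaternion ℝ),
        inQH n Λ X → inQH n Λ Y → inQH n Λ Z →
          nabLamH n lam X (nabLamH n lam Y Z) - nabLamH n lam Y (nabLamH n lam X Z)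
            - nabLamH n lam ⁅X, Y⁆ Z = 0 := by
  rintro ⟨lam, hflat⟩
  let U (d : Fin n) : Matrix (Fin n) (Fin n) ℍ[ℝ] := single d d quatI
  have hneg (d : Fin n) : lam (nabSLH n (U d) (U d)) < 0 :=
    lam_nabSLH_single_self_neg lam d <| hflat _ _ _
      (inQH_single_self Λ d rfl) (inQH_single_self Λ d rfl) (inQH_single_self Λ d rfl)
  have hsum : ∑ d, lam (nabSLH n (U d) (U d)) = 0 := by
    rw [← map_sum, sum_nabSLH_single_self rfl, map_zero]
  have : Nonempty (Fin n) := ⟨⟨0, by omega⟩⟩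
  exact (Finset.sum_neg (fun d _ => hneg d) Finset.univ_nonempty).ne hsum

/-- For `n ≥ 2` and ANY proper subset `Λ'` of `{1,…,n−1}`, there is no
ℝ-linear functional `λ` making the modified product `∇^λ_X Y = ∇_X Y + λ(X)·Y + λ(Y)·X`
flat on the parabolic subalgebra `q_{Λ'}` of `sl(n,ℍ)`: the induced affine connection
on any parabolic subalgebra of `sl(n,ℍ)` is not projectively equivalent to any
left-invariant flat affine connection. -/
theorem parabolic_quaternion_not_projectively_flat_to_flat (n : ℕ) (hn : 2 ≤ n)
    (Λ : Finset ℕ) (hΛ : Λ ⊆ Finset.Icc 1 (n - 1)) (hΛne : Λ ≠ Finset.Icc 1 (n - 1)) :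
    ¬ ∃ lam : Matrix (Fin n) (Fin n) (Quaternion ℝ) →ₗ[ℝ] ℝ,
      ∀ X Y Z : Matrix (Fin n) (Fin n) (Quaternion ℝ),
        inQH n Λ X → inQH n Λ Y → inQH n Λ Z →
          nabLamH n lam X (nabLamH n lam Y Z) - nabLamH n lam Y (nabLamH n lam X Z)
            - nabLamH n lam ⁅X, Y⁆ Z = 0 :=
  parabolic_quaternion_not_projectively_flat_to_flat_general n hn Λ

end
end
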